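/- The partial transpose ρ₆₆^{T_B} of ρ₆₆ is positive semidefinite. -/
import Mathlib


open Matrix ComplexOrder

noncomputable def N66 : Matrix (Fin 9) (Fin 9) ℂ :=
  !![1, 0, 0, 0, 0, 0, 0, 0, -1;
     0, 2, 0, -1, 0, 0, 0, 0, 0;
     0, 0, 1, 0, 0, 0, 1, 0, 0;
     0, -1, 0, 1, 0, 0, 0, 0, 1;
     0, 0, 0, 0, 1, 0, 1, 0, 0;
     0, 0, 0, 0, 0, 1, 0, -1, 0;
     0, 0, 1, 0, 1, 0, 2, 0, 0;
     0, 0, 0, 0, 0, -1, 0, 1, 0;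
     -1, 0, 0, 1, 0, 0, 0, 0, 3]

/-- The index map `(i, j) ↦ 3 i + j` from `Fin 3 × Fin 3` to `Fin 9`. -/
def idx (p : Fin 3 × Fin 3) : Fin 9 :=
  ⟨3 * p.1.val + p.2.val, by have h1 := p.1.isLt; have h2 := p.2.isLt; omega⟩

/-- The state `ρ₆₆`, viewed as an operator on `ℂ³ ⊗ ℂ³`. -/
noncomputable def rho66 : Matrix (Fin 3 × Fin 3) (Fin 3 × Fin 3) ℂ :=
  fun p q => (1 / 13 : ℂ) * N66 (idx p) (idx q)

/-- The partial transpose on the second factor: `(ρ^{T_B})_{(i,j),(k,l)} = ρ_{(i,l),(k,j)}`. -/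
noncomputable def ptrans (ρ : Matrix (Fin 3 × Fin 3) (Fin 3 × Fin 3) ℂ) :
    Matrix (Fin 3 × Fin 3) (Fin 3 × Fin 3) ℂ :=
  fun p q => ρ (p.1, q.2) (q.1, p.2)

noncomputable def Umat : Matrix (Fin 9) (Fin 9) ℂ :=
  !![1, 0, 0, 0, -1, 0, 0, 0, 1;
     0, 1, 0, 0, 0, 0, 0, 0, 0;
     0, 0, 1, 0, 0, 0, -1, 0, 0;
     0, 0, 0, 1, 0, 0, 0, 1, 0;
     0, 0, 0, 0, 1, 0, 0, 0, 0;
     0, 0, 0, 0, 0, 1, 1, 0, 0;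
     0, 0, 0, 0, 0, 0, 1, 0, 0;
     0, 0, 0, 0, 0, 0, 0, 1, 0;
     0, 0, 0, 0, 0, 0, 0, 0, 1]

noncomputable def dvec : Fin 9 → ℂ := ![1/13, 2/13, 1/13, 1/13, 0, 1/13, 0, 0, 2/13]

noncomputable def Pmat : Matrix (Fin 9) (Fin 9) ℂ := Umatᴴ * Matrix.diagonal dvec * Umat

section
variable {α : Type*}
@[simp] lemma vc9_5 (a : α) (u : Fin 8 → α) : Matrix.vecCons a u 5 = u 4 := rfl
@[simp] lemma vc8_5 (a : α) (u : Fin 7 → α) : Matrix.vecCons a u 5 = u 4 := rfl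
@[simp] lemma vc7_5 (a : α) (u : Fin 6 → α) : Matrix.vecCons a u 5 = u 4 := rfl
@[simp] lemma vc6_5 (a : α) (u : Fin 5 → α) : Matrix.vecCons a u 5 = u 4 := rfl
@[simp] lemma vc9_6 (a : α) (u : Fin 8 → α) : Matrix.vecCons a u 6 = u 5 := rfl
@[simp] lemma vc8_6 (a : α) (u : Fin 7 → α) : Matrix.vecCons a u 6 = u 5 := rfl
@[simp] lemma vc7_6 (a : α) (u : Fin 6 → α) : Matrix.vecCons a u 6 = u 5 := rfl
@[simp] lemma vc9_7 (a : α) (u : Fin 8 → α) : Matrix.vecCons a u 7 = u 6 := rfl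
@[simp] lemma vc8_7 (a : α) (u : Fin 7 → α) : Matrix.vecCons a u 7 = u 6 := rfl
@[simp] lemma vc9_8 (a : α) (u : Fin 8 → α) : Matrix.vecCons a u 8 = u 7 := rfl
end

lemma Pmat_posSemidef : Pmat.PosSemidef := by
  have hd : (Matrix.diagonal dvec).PosSemidef := by
    refine Matrix.posSemidef_diagonal_iff.mpr (fun i => ?_)
    have h : ∀ (c : ℂ), c = 0 ∨ c = 1/13 ∨ c = 2/13 → 0 ≤ c := by
      rintro c (rfl | rfl | rfl) <;> norm_num [Complex.le_def]
    fin_cases i <;>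
      exact h _ (by first | exact Or.inl rfl | exact Or.inr (Or.inl rfl) |
        exact Or.inr (Or.inr rfl))
  exact hd.conjTranspose_mul_mul_same Umat

lemma Pmat_entry (i j : Fin 9) :
    Pmat i j = ∑ k, star (Umat k i) * dvec k * Umat k j := by
  rw [Pmat, Matrix.mul_apply]
  simp only [Matrix.mul_diagonal, Matrix.conjTranspose_apply]

set_option maxHeartbeats 4000000 in
/-- The partial transpose of `ρ₆₆` is positive semidefinite. -/
theorem rho66_ptrans_posSemidef : (ptrans rho66).PosSemidef := by
  have h : ptrans rho66 = Pmat.submatrix idx idx := by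
    ext p q
    obtain ⟨i, j⟩ := p
    obtain ⟨k, l⟩ := q
    simp only [Matrix.submatrix_apply, Pmat_entry, ptrans, rho66]
    fin_cases i <;> fin_cases j <;> fin_cases k <;> fin_cases l <;>
      · simp [Umat, dvec, N66, idx, Fin.sum_univ_succ]
        try rfl
        try norm_num
        try rfl
  rw [h]
  exact Pmat_posSemidef.submatrix idx
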